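/- Let G be a finite group with a unitary representation U on ℂ^d and twirling operation 𝒢, and let ψ be a density matrix on ℂ^d. Let M ≥ 1 and for each m ∈ Fin M let E_m be a positive trace-preserving linear map on d×d matrices satisfying E_m(𝒢(Y)) = 𝒢(Y) for every d×d matrix Y. Let ρ̄ = (1/M) Σ_m E_m(ψ). Then (1/M) Σ_{m} D(E_m(ψ) ‖ ρ̄) ≤ D(ψ ‖ 𝒢(ψ)), where D is the quantum relative entropy. -/

import Mathlib

open scoped BigOperators Kronecker ComplexOrder
open Matrix

/-- von Neumann entropy of a matrix (via eigenvalues when Hermitian, else 0). -/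
noncomputable def vnEntropy {ι : Type*} [Fintype ι] [DecidableEq ι]
    (ρ : Matrix ι ι ℂ) : ℝ :=
  if h : ρ.IsHermitian then -∑ i, h.eigenvalues i * Real.log (h.eigenvalues i) else 0

/-- Twirling operation induced by a family of matrices indexed by a finite group. -/
noncomputable def twirl {G ι : Type*} [Fintype G] [Fintype ι]
    (U : G → Matrix ι ι ℂ) (X : Matrix ι ι ℂ) : Matrix ι ι ℂ :=
  (Fintype.card G : ℂ)⁻¹ • ∑ g, U g * X * (U g)ᴴ

/-- Apply a real function spectrally to a Hermitian matrix (0 otherwise). -/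
noncomputable def matFun {ι : Type*} [Fintype ι] [DecidableEq ι]
    (f : ℝ → ℝ) (ρ : Matrix ι ι ℂ) : Matrix ι ι ℂ :=
  if h : ρ.IsHermitian then
    (h.eigenvectorUnitary : Matrix ι ι ℂ) *
      Matrix.diagonal (fun i => (f (h.eigenvalues i) : ℂ)) *
      (star (h.eigenvectorUnitary : Matrix ι ι ℂ))
  else 0

/-- Spectral power `ρ ^ t` with the convention `0 ^ t = 0`. -/
noncomputable def matPow {ι : Type*} [Fintype ι] [DecidableEq ι]
    (ρ : Matrix ι ι ℂ) (t : ℝ) : Matrix ι ι ℂ :=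
  matFun (fun x => if x = 0 then 0 else x ^ t) ρ

/-- Spectral logarithm with the convention `log 0 = 0`. -/
noncomputable def matLog {ι : Type*} [Fintype ι] [DecidableEq ι]
    (ρ : Matrix ι ι ℂ) : Matrix ι ι ℂ :=
  matFun Real.log ρ

/-- Absolute value `|M| = √(MᴴM)`. -/
noncomputable def matAbs {ι : Type*} [Fintype ι] [DecidableEq ι]
    (M : Matrix ι ι ℂ) : Matrix ι ι ℂ :=
  matPow (Mᴴ * M) (1/2 : ℝ)


/-- Quantum relative entropy `D(ρ‖σ) = Re tr[ρ(log ρ − log σ)]`, with the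
spectral logarithm and convention `log 0 = 0`. -/
noncomputable def relEnt {ι : Type*} [Fintype ι] [DecidableEq ι]
    (ρ σ : Matrix ι ι ℂ) : ℝ :=
  ((ρ * (matLog ρ - matLog σ)).trace).re

/-!
Write `σ = 𝒢(ψ)` and `ρ̄` for the average of the states `E_m(ψ)`. The identity
`∑ₘ D(E_m ψ‖ρ̄) = ∑ₘ D(E_m ψ‖σ) - M D(ρ̄‖σ)` and Klein's inequality `D(ρ̄‖σ) ≥ 0` reduce the
claim to the data processing inequality `D(E_m ψ‖σ) ≤ D(ψ‖σ)`, which we prove directly for these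
maps. Each `E_m` fixes every matrix commuting with the representation: `1`, `f(σ)` and the
spectral projections of `σ`. A positive trace-preserving map fixing a projection `P` and `1 - P`
has a trace dual fixing `P`, so `tr (E_m(B) f(σ)) = tr (B f(σ))` and the cross terms
`tr (ρ log σ)` agree. What remains, `tr (E_m ψ log E_m ψ) ≤ tr (ψ log ψ)` for a unital positive
trace-preserving map, follows from the concavity of `-x log x`: the eigenvalues of `E_m ψ` are
obtained from those of `ψ` by a doubly stochastic matrix.
-/

open scoped MatrixOrder

section SpectralCalculus

variable {n : Type*} [Fintype n] [DecidableEq n]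

theorem matFun_eq_cfc (f : ℝ → ℝ) (A : Matrix n n ℂ) : matFun f A = cfc f A := by
  by_cases hA : A.IsHermitian
  · rw [matFun, dif_pos hA, hA.cfc_eq, IsHermitian.cfc, Unitary.conjStarAlgAut_apply]
    rfl
  · rw [matFun, dif_neg hA]
    exact (cfc_apply_of_not_predicate A hA).symm

theorem relEnt_eq_sub (ρ σ : Matrix n n ℂ) :
    relEnt ρ σ = (ρ * cfc Real.log ρ).trace.re - (ρ * cfc Real.log σ).trace.re := by
  rw [relEnt, matLog, matLog, matFun_eq_cfc, matFun_eq_cfc, Matrix.mul_sub, trace_sub,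
    Complex.sub_re]

theorem Matrix.continuousOn_real_spectrum (f : ℝ → ℝ) (A : Matrix n n ℂ) :
    ContinuousOn f (spectrum ℝ A) :=
  A.finite_real_spectrum.continuousOn f

theorem Matrix.isStarProjection_cfc_indicator (σ : Matrix n n ℂ) (c : ℝ) :
    IsStarProjection (cfc (fun x : ℝ => if x = c then 1 else 0) σ) := by
  refine ⟨?_, cfc_predicate _ σ⟩
  rw [IsIdempotentElem, ← cfc_mul _ _ σ (continuousOn_real_spectrum _ σ)
    (continuousOn_real_spectrum _ σ)]
  congr 1
  ext x
  split_ifs <;> norm_num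

theorem Matrix.cfc_eq_sum_smul_cfc_indicator (f : ℝ → ℝ) (σ : Matrix n n ℂ) :
    cfc f σ = ∑ c ∈ σ.finite_real_spectrum.toFinset,
      f c • cfc (fun x : ℝ => if x = c then 1 else 0) σ := by
  have hf : Set.EqOn f (∑ c ∈ σ.finite_real_spectrum.toFinset,
      fun x : ℝ => f c * if x = c then 1 else 0) (spectrum ℝ σ) := fun x hx => by
    simp [Finset.sum_apply, hx]
  rw [cfc_congr hf, cfc_sum _ _ _ fun c _ => continuousOn_real_spectrum _ σ]
  exact Finset.sum_congr rfl fun c _ => cfc_const_mul _ _ σ (continuousOn_real_spectrum _ σ)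

theorem Matrix.mul_cfc_indicator_zero_self {σ : Matrix n n ℂ} (hσ : IsSelfAdjoint σ) :
    σ * cfc (fun x : ℝ => if x = 0 then 1 else 0) σ = 0 := by
  have h := cfc_mul (fun x : ℝ => x) (fun x : ℝ => if x = 0 then 1 else 0) σ
    (continuousOn_real_spectrum _ σ) (continuousOn_real_spectrum _ σ)
  rw [cfc_id' ℝ σ] at h
  rw [← h, ← cfc_zero ℝ σ]
  congr 1
  ext x
  split_ifs with hx <;> simp [hx]

theorem Matrix.IsHermitian.cfc_eq_mul_diagonal_mul {A : Matrix n n ℂ} (hA : A.IsHermitian)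
    (f : ℝ → ℝ) :
    cfc f A = (hA.eigenvectorUnitary : Matrix n n ℂ) *
      diagonal (fun i => (f (hA.eigenvalues i) : ℂ)) *
        star (hA.eigenvectorUnitary : Matrix n n ℂ) := by
  rw [← matFun_eq_cfc, matFun, dif_pos hA]

theorem Matrix.IsHermitian.star_eigenvectorUnitary_mul_mul {A : Matrix n n ℂ}
    (hA : A.IsHermitian) :
    star (hA.eigenvectorUnitary : Matrix n n ℂ) * A * hA.eigenvectorUnitary =
      diagonal fun i => (hA.eigenvalues i : ℂ) := by
  simpa [Unitary.conjStarAlgAut_star_apply, Function.comp_def] using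
    hA.conjStarAlgAut_star_eigenvectorUnitary

theorem Matrix.IsHermitian.eq_sum_smul_eigenprojection {A : Matrix n n ℂ} (hA : A.IsHermitian) :
    A = ∑ j, (hA.eigenvalues j : ℂ) • ((hA.eigenvectorUnitary : Matrix n n ℂ) * single j j 1 *
      star (hA.eigenvectorUnitary : Matrix n n ℂ)) := by
  conv_lhs => rw [← cfc_id ℝ A, hA.cfc_eq_mul_diagonal_mul, ← sum_single_eq_diagonal]
  simp only [Finset.mul_sum, Finset.sum_mul, id]
  refine Finset.sum_congr rfl fun j _ => ?_
  rw [show single j j (hA.eigenvalues j : ℂ) = (hA.eigenvalues j : ℂ) • single j j 1 by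
    rw [smul_single, smul_eq_mul, mul_one], Matrix.mul_smul, Matrix.smul_mul]

theorem Matrix.IsHermitian.trace_cfc {A : Matrix n n ℂ} (hA : A.IsHermitian) (f : ℝ → ℝ) :
    (cfc f A).trace = ∑ i, (f (hA.eigenvalues i) : ℂ) := by
  rw [hA.cfc_eq_mul_diagonal_mul, trace_mul_cycle, Unitary.coe_star_mul_self, Matrix.one_mul,
    trace_diagonal]

theorem Matrix.IsHermitian.re_trace_mul_cfc_self {A : Matrix n n ℂ} (hA : A.IsHermitian)
    (f : ℝ → ℝ) : (A * cfc f A).trace.re = ∑ i, hA.eigenvalues i * f (hA.eigenvalues i) := by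
  have hmul : A * cfc f A = cfc (fun x => x * f x) A := by
    rw [cfc_mul _ _ A (continuousOn_real_spectrum _ A) (continuousOn_real_spectrum _ A),
      cfc_id' ℝ A]
  rw [hmul, hA.trace_cfc, Complex.re_sum]
  simp

end SpectralCalculus

section ScalarInequalities

open Real

variable {ι : Type*} [Fintype ι] [DecidableEq ι]

theorem Real.mul_log_sub_log_le_sub {a b : ℝ} (ha : 0 ≤ a) (hb : 0 ≤ b) (hab : b = 0 → a = 0) :
    a * (log b - log a) ≤ b - a := by
  rcases ha.eq_or_lt with rfl | ha
  · simpa using hb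
  have hb : 0 < b := hb.lt_of_ne fun h => ha.ne' (hab h.symm)
  have h := log_le_sub_one_of_pos (div_pos hb ha)
  rw [log_div hb.ne' ha.ne'] at h
  calc a * (log b - log a) ≤ a * (b / a - 1) := mul_le_mul_of_nonneg_left h ha.le
    _ = b - a := by field_simp

theorem Real.sum_sub_sum_le_of_mem_doublyStochastic {p q : ι → ℝ} {P : Matrix ι ι ℝ}
    (hP : P ∈ doublyStochastic ℝ ι) (hp : 0 ≤ p) (hq : 0 ≤ q)
    (hsupp : ∀ i j, q j = 0 → p i * P i j = 0) :
    ∑ i, p i - ∑ j, q j ≤ ∑ i, p i * log (p i) - ∑ i, ∑ j, p i * (P i j * log (q j)) := by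
  obtain ⟨hP0, hrow, hcol⟩ := mem_doublyStochastic_iff_sum.mp hP
  have hterm : ∀ i j, P i j * (p i * (log (q j) - log (p i))) ≤ P i j * (q j - p i) := by
    intro i j
    rcases (hP0 i j).eq_or_lt with h | h
    · simp [← h]
    refine mul_le_mul_of_nonneg_left (mul_log_sub_log_le_sub (hp i) (hq j) fun hqj => ?_) h.le
    simpa [h.ne'] using hsupp i j hqj
  have hleft : ∀ i, ∑ j, P i j * (p i * (log (q j) - log (p i))) =
      ∑ j, p i * (P i j * log (q j)) - p i * log (p i) := fun i => by
    calc _ = ∑ j, p i * (P i j * log (q j)) - (∑ j, P i j) * (p i * log (p i)) := by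
          rw [Finset.sum_mul, ← Finset.sum_sub_distrib]
          exact Finset.sum_congr rfl fun j _ => by ring
      _ = _ := by rw [hrow i, one_mul]
  have hright : ∑ i, ∑ j, P i j * (q j - p i) = ∑ j, q j - ∑ i, p i := by
    rw [Finset.sum_congr rfl fun i _ => by rw [Finset.sum_congr rfl fun j _ => mul_sub _ _ _,
      Finset.sum_sub_distrib, ← Finset.sum_mul, hrow, one_mul], Finset.sum_sub_distrib,
      Finset.sum_comm]
    simp only [← Finset.sum_mul, hcol, one_mul]
  have hsum := Finset.sum_le_sum fun i (_ : i ∈ Finset.univ) =>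
    Finset.sum_le_sum fun j (_ : j ∈ Finset.univ) => hterm i j
  simp only [hleft, hright, Finset.sum_sub_distrib] at hsum
  linarith

theorem Real.sum_mul_log_mulVec_le_of_mem_doublyStochastic {p : ι → ℝ} {P : Matrix ι ι ℝ}
    (hP : P ∈ doublyStochastic ℝ ι) (hp : 0 ≤ p) :
    ∑ i, (P *ᵥ p) i * log ((P *ᵥ p) i) ≤ ∑ i, p i * log (p i) := by
  obtain ⟨hP0, hrow, hcol⟩ := mem_doublyStochastic_iff_sum.mp hP
  have hjensen : ∀ i, ∑ j, P i j * negMulLog (p j) ≤ negMulLog ((P *ᵥ p) i) := fun i => by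
    simpa [mulVec, dotProduct] using concaveOn_negMulLog.le_map_sum (t := Finset.univ)
      (fun j _ => hP0 i j) (hrow i) (fun j _ => hp j)
  have hsum : ∑ j, negMulLog (p j) ≤ ∑ i, negMulLog ((P *ᵥ p) i) :=
    calc ∑ j, negMulLog (p j) = ∑ i, ∑ j, P i j * negMulLog (p j) := by
          rw [Finset.sum_comm]
          simp only [← Finset.sum_mul, hcol, one_mul]
      _ ≤ _ := Finset.sum_le_sum fun i _ => hjensen i
  simpa [negMulLog, Finset.sum_neg_distrib] using hsum

end ScalarInequalities

section Klein

variable {n : Type*} [Fintype n] [DecidableEq n]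

theorem Matrix.normSq_mem_doublyStochastic {T : Matrix n n ℂ} (hT : T ∈ unitaryGroup n ℂ) :
    of (fun i j => Complex.normSq (T i j)) ∈ doublyStochastic ℝ n := by
  rw [mem_doublyStochastic_iff_sum]
  refine ⟨fun i j => Complex.normSq_nonneg _, fun i => ?_, fun j => ?_⟩
  · have h := congrFun (congrFun (mem_unitaryGroup_iff.mp hT) i) i
    simp only [mul_apply, star_apply, one_apply_eq, RCLike.star_def, Complex.mul_conj] at h
    exact_mod_cast h
  · have h := congrFun (congrFun (mem_unitaryGroup_iff'.mp hT) j) j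
    simp only [mul_apply, star_apply, one_apply_eq, RCLike.star_def,
      ← Complex.normSq_eq_conj_mul_self] at h
    exact_mod_cast h

theorem Matrix.trace_diagonal_mul_diagonal_mul_star (T : Matrix n n ℂ) (d e : n → ℂ) :
    (diagonal d * T * diagonal e * star T).trace =
      ∑ i, ∑ j, d i * (Complex.normSq (T i j) * e j) := by
  simp only [trace, diag, mul_apply, diagonal_apply, star_apply, ite_mul, mul_ite, zero_mul,
    mul_zero, Finset.sum_ite_eq, Finset.sum_ite_eq', Finset.mem_univ, if_true]
  refine Finset.sum_congr rfl fun i _ => Finset.sum_congr rfl fun j _ => ?_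
  rw [Complex.normSq_eq_conj_mul_self, RCLike.star_def]
  ring

noncomputable def Matrix.IsHermitian.overlap {A B : Matrix n n ℂ} (hA : A.IsHermitian)
    (hB : B.IsHermitian) : Matrix n n ℝ :=
  of fun i j => Complex.normSq
    ((star (hA.eigenvectorUnitary : Matrix n n ℂ) * hB.eigenvectorUnitary) i j)

theorem Matrix.IsHermitian.overlap_mem_doublyStochastic {A B : Matrix n n ℂ}
    (hA : A.IsHermitian) (hB : B.IsHermitian) : hA.overlap hB ∈ doublyStochastic ℝ n :=
  normSq_mem_doublyStochastic
    (mul_mem (Unitary.star_mem hA.eigenvectorUnitary.2) hB.eigenvectorUnitary.2)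

theorem Matrix.IsHermitian.re_trace_mul_cfc {A B : Matrix n n ℂ} (hA : A.IsHermitian)
    (hB : B.IsHermitian) (g : ℝ → ℝ) :
    (A * cfc g B).trace.re =
      ∑ i, ∑ j, hA.eigenvalues i * (hA.overlap hB i j * g (hB.eigenvalues j)) := by
  have hA' := hA.cfc_eq_mul_diagonal_mul id
  rw [cfc_id ℝ A] at hA'
  set V : Matrix n n ℂ := ↑hA.eigenvectorUnitary
  set W : Matrix n n ℂ := ↑hB.eigenvectorUnitary
  set D := diagonal fun i => ((hA.eigenvalues i : ℝ) : ℂ)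
  set G := diagonal fun j => ((g (hB.eigenvalues j) : ℝ) : ℂ)
  have hprod : A * cfc g B = V * (D * star V * W * G * star W) := by
    conv_lhs => rw [hB.cfc_eq_mul_diagonal_mul, hA']
    simp only [id, Matrix.mul_assoc]
    rfl
  have hcycle : D * star V * W * G * star W * V = D * (star V * W) * G * star (star V * W) := by
    simp only [star_mul, star_star, Matrix.mul_assoc]
  rw [hprod, trace_mul_comm, hcycle, trace_diagonal_mul_diagonal_mul_star, Complex.re_sum]
  simp [overlap, ← Complex.ofReal_mul, V, W]

/-- Klein's inequality; `hsupp` says that the support of `ρ` lies in that of `σ`. -/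
theorem re_trace_sub_le_relEnt {ρ σ : Matrix n n ℂ} (hρ : ρ.PosSemidef) (hσ : σ.PosSemidef)
    (hsupp : (ρ * cfc (fun x : ℝ => if x = 0 then 1 else 0) σ).trace = 0) :
    (ρ.trace - σ.trace).re ≤ relEnt ρ σ := by
  set P := hρ.1.overlap hσ.1
  have hP := hρ.1.overlap_mem_doublyStochastic hσ.1
  have hρ0 : 0 ≤ hρ.1.eigenvalues := hρ.eigenvalues_nonneg
  have hσ0 : 0 ≤ hσ.1.eigenvalues := hσ.eigenvalues_nonneg
  have hsupp' : ∀ i j, hσ.1.eigenvalues j = 0 → hρ.1.eigenvalues i * P i j = 0 := by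
    have hzero := congrArg Complex.re hsupp
    rw [hρ.1.re_trace_mul_cfc hσ.1, Complex.zero_re] at hzero
    have hnonneg : ∀ i j,
        0 ≤ hρ.1.eigenvalues i * (P i j * if hσ.1.eigenvalues j = 0 then 1 else 0) :=
      fun i j => mul_nonneg (hρ0 i) (mul_nonneg ((mem_doublyStochastic_iff_sum.mp hP).1 i j)
        (by split_ifs <;> norm_num))
    intro i j hj
    have hi := (Finset.sum_eq_zero_iff_of_nonneg fun i _ => Finset.sum_nonneg fun j _ =>
      hnonneg i j).mp hzero i (Finset.mem_univ i)
    simpa [hj] using (Finset.sum_eq_zero_iff_of_nonneg fun j _ => hnonneg i j).mp hi j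
      (Finset.mem_univ j)
  have := Real.sum_sub_sum_le_of_mem_doublyStochastic hP hρ0 hσ0 hsupp'
  rw [relEnt_eq_sub, hρ.1.re_trace_mul_cfc_self, hρ.1.re_trace_mul_cfc hσ.1,
    hρ.1.trace_eq_sum_eigenvalues, hσ.1.trace_eq_sum_eigenvalues]
  simpa using this

theorem relEnt_nonneg_of_forall_trace_mul_cfc_eq {ρ σ : Matrix n n ℂ} (hρ : ρ.PosSemidef)
    (hσ : σ.PosSemidef) (h : ∀ f : ℝ → ℝ, (ρ * cfc f σ).trace = (σ * cfc f σ).trace) :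
    0 ≤ relEnt ρ σ := by
  have hKlein := re_trace_sub_le_relEnt hρ hσ <| by
    rw [h, mul_cfc_indicator_zero_self hσ.1, trace_zero]
  have htr := h 1
  rw [cfc_one ℝ σ, Matrix.mul_one, Matrix.mul_one] at htr
  rwa [htr, sub_self, Complex.zero_re] at hKlein

end Klein

section PositiveMaps

variable {n : Type*} [Fintype n] [DecidableEq n]

theorem Matrix.PosSemidef.trace_mul_nonneg {A B : Matrix n n ℂ} (hA : A.PosSemidef)
    (hB : B.PosSemidef) : 0 ≤ (A * B).trace := by
  have hS : IsSelfAdjoint (CFC.sqrt A) := (CFC.sqrt_nonneg A).isSelfAdjoint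
  have hA' : CFC.sqrt A * CFC.sqrt A = A := CFC.sqrt_mul_sqrt_self A hA.nonneg
  have : (A * B).trace = ((CFC.sqrt A)ᴴ * B * CFC.sqrt A).trace := by
    rw [← star_eq_conjTranspose, hS.star_eq]
    conv_lhs => rw [← hA', Matrix.mul_assoc, trace_mul_comm]
  rw [this]
  exact (hB.conjTranspose_mul_mul_same _).trace_nonneg

theorem Matrix.PosSemidef.mul_eq_zero_of_trace_mul_eq_zero {A P : Matrix n n ℂ}
    (hA : A.PosSemidef) (hP : IsStarProjection P) (h : (A * P).trace = 0) : A * P = 0 := by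
  have hS : IsSelfAdjoint (CFC.sqrt A) := (CFC.sqrt_nonneg A).isSelfAdjoint
  have hA' : CFC.sqrt A * CFC.sqrt A = A := CFC.sqrt_mul_sqrt_self A hA.nonneg
  have hPAP : Pᴴ * A * P = 0 := by
    refine ((hA.conjTranspose_mul_mul_same P).trace_eq_zero_iff).mp ?_
    rw [Matrix.mul_assoc, trace_mul_comm, Matrix.mul_assoc, ← star_eq_conjTranspose,
      hP.isSelfAdjoint.star_eq, hP.isIdempotentElem.eq, h]
  have hSP : CFC.sqrt A * P = 0 := by
    rw [← conjTranspose_mul_self_eq_zero, conjTranspose_mul, ← star_eq_conjTranspose (CFC.sqrt A),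
      hS.star_eq, Matrix.mul_assoc, ← Matrix.mul_assoc (CFC.sqrt A), hA', ← Matrix.mul_assoc, hPAP]
  rw [← hA', Matrix.mul_assoc, hSP, Matrix.mul_zero]

theorem Matrix.dotProduct_mulVec_eq_trace_mul_vecMulVec {m : Type*} [Fintype m]
    (A : Matrix m m ℂ) (x : m → ℂ) :
    star x ⬝ᵥ A *ᵥ x = (A * vecMulVec x (star x)).trace := by
  simp only [trace, diag, mul_apply, vecMulVec_apply, dotProduct, mulVec, Pi.star_apply,
    Finset.mul_sum]
  exact Finset.sum_congr rfl fun i _ => Finset.sum_congr rfl fun j _ => by ring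

noncomputable def Matrix.traceDual (Φ : Matrix n n ℂ →ₗ[ℂ] Matrix n n ℂ) :
    Matrix n n ℂ →ₗ[ℂ] Matrix n n ℂ where
  toFun X := of fun i j => (X * Φ (single j i 1)).trace
  map_add' X Y := by ext; simp [Matrix.add_mul]
  map_smul' c X := by ext; simp

theorem Matrix.trace_traceDual_mul (Φ : Matrix n n ℂ →ₗ[ℂ] Matrix n n ℂ) (X Y : Matrix n n ℂ) :
    (traceDual Φ X * Y).trace = (X * Φ Y).trace := by
  induction Y using Matrix.induction_on' with
  | h_zero => simp
  | h_add Y Z hY hZ => simp [Matrix.mul_add, hY, hZ]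
  | h_std_basis i j c =>
    rw [show single i j c = c • single i j 1 by rw [smul_single, smul_eq_mul, mul_one],
      map_smul, Matrix.mul_smul, Matrix.mul_smul, trace_smul, trace_smul, trace_mul_single]
    simp [traceDual]

theorem Matrix.traceDual_one (Φ : Matrix n n ℂ →ₗ[ℂ] Matrix n n ℂ)
    (htr : ∀ X, (Φ X).trace = X.trace) : traceDual Φ 1 = 1 := by
  ext i j
  rcases eq_or_ne i j with rfl | hij
  · simp [traceDual, htr]
  · simp [traceDual, htr, trace_single_eq_of_ne _ _ _ hij.symm, one_apply_ne hij]

theorem Matrix.posSemidef_traceDual (Φ : Matrix n n ℂ →ₚ[ℂ] Matrix n n ℂ) {X : Matrix n n ℂ}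
    (hX : X.PosSemidef) : (traceDual Φ.toLinearMap X).PosSemidef := by
  have hherm : (traceDual Φ.toLinearMap X).IsHermitian := by
    ext i j
    simp only [conjTranspose_apply, traceDual, LinearMap.coe_mk, AddHom.coe_mk, of_apply,
      PositiveLinearMap.coe_toLinearMap]
    rw [← trace_conjTranspose, conjTranspose_mul, hX.1.eq, ← star_eq_conjTranspose, ← map_star,
      star_eq_conjTranspose, conjTranspose_single, star_one, trace_mul_comm]
  refine .of_dotProduct_mulVec_nonneg hherm fun x => ?_
  rw [dotProduct_mulVec_eq_trace_mul_vecMulVec, trace_traceDual_mul]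
  exact hX.trace_mul_nonneg (Φ.map_nonneg (posSemidef_vecMulVec_self_star x).nonneg).posSemidef

theorem Matrix.traceDual_eq_self_of_isStarProjection (Φ : Matrix n n ℂ →ₚ[ℂ] Matrix n n ℂ)
    (htr : ∀ X, (Φ X).trace = X.trace) {P : Matrix n n ℂ} (hP : IsStarProjection P)
    (hΦP : Φ P = P) (hΦP' : Φ (1 - P) = 1 - P) : traceDual Φ.toLinearMap P = P := by
  set A := traceDual Φ.toLinearMap P
  have hdual : traceDual Φ.toLinearMap (1 - P) = 1 - A := by
    rw [map_sub, traceDual_one _ htr]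
  have hA : A.PosSemidef := posSemidef_traceDual Φ hP.nonneg.posSemidef
  have hA' : (1 - A).PosSemidef := hdual ▸ posSemidef_traceDual Φ hP.one_sub.nonneg.posSemidef
  have h1 : A * (1 - P) = 0 := hA.mul_eq_zero_of_trace_mul_eq_zero hP.one_sub <| by
    rw [trace_traceDual_mul, PositiveLinearMap.coe_toLinearMap, hΦP', hP.mul_one_sub_self,
      trace_zero]
  have h2 : (1 - A) * P = 0 := hA'.mul_eq_zero_of_trace_mul_eq_zero hP <| by
    rw [← hdual, trace_traceDual_mul, PositiveLinearMap.coe_toLinearMap, hΦP,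
      hP.one_sub_mul_self, trace_zero]
  rw [Matrix.mul_sub, Matrix.mul_one, sub_eq_zero] at h1
  rw [Matrix.sub_mul, Matrix.one_mul, sub_eq_zero] at h2
  exact h1.trans h2.symm

theorem Matrix.traceDual_cfc (Φ : Matrix n n ℂ →ₚ[ℂ] Matrix n n ℂ)
    (htr : ∀ X, (Φ X).trace = X.trace) {σ : Matrix n n ℂ} (hσ : IsSelfAdjoint σ)
    (hfix : ∀ g : ℝ → ℝ, Φ (cfc g σ) = cfc g σ) (f : ℝ → ℝ) :
    traceDual Φ.toLinearMap (cfc f σ) = cfc f σ := by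
  rw [cfc_eq_sum_smul_cfc_indicator, map_sum]
  refine Finset.sum_congr rfl fun c _ => ?_
  rw [LinearMap.map_smul_of_tower, traceDual_eq_self_of_isStarProjection Φ htr
    (isStarProjection_cfc_indicator σ c) (hfix _)]
  have h1 : 1 - cfc (fun x : ℝ => if x = c then 1 else 0) σ =
      cfc (fun x : ℝ => 1 - if x = c then 1 else 0) σ := by
    rw [cfc_sub _ _ σ (continuousOn_real_spectrum _ σ) (continuousOn_real_spectrum _ σ),
      cfc_const_one ℝ σ]
  rw [h1, hfix]

theorem Matrix.trace_map_mul_cfc (Φ : Matrix n n ℂ →ₚ[ℂ] Matrix n n ℂ)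
    (htr : ∀ X, (Φ X).trace = X.trace) {σ : Matrix n n ℂ} (hσ : IsSelfAdjoint σ)
    (hfix : ∀ g : ℝ → ℝ, Φ (cfc g σ) = cfc g σ) (B : Matrix n n ℂ) (f : ℝ → ℝ) :
    (Φ B * cfc f σ).trace = (B * cfc f σ).trace := by
  rw [trace_mul_comm, ← PositiveLinearMap.coe_toLinearMap, ← trace_traceDual_mul,
    traceDual_cfc Φ htr hσ hfix, trace_mul_comm]

end PositiveMaps

section Entropy

variable {n : Type*} [Fintype n] [DecidableEq n]

/-- `transitionMatrix Φ V W i j = ⟨wᵢ, Φ (vⱼ vⱼ†) wᵢ⟩`, where `vⱼ` and `wᵢ` are the columns of `V`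
and `W`. -/
noncomputable def Matrix.transitionMatrix (Φ : Matrix n n ℂ →ₗ[ℂ] Matrix n n ℂ)
    (V W : Matrix n n ℂ) : Matrix n n ℝ :=
  of fun i j => ((star W * Φ (V * single j j 1 * star V) * W) i i).re

theorem Matrix.transitionMatrix_mem_doublyStochastic (Φ : Matrix n n ℂ →ₚ[ℂ] Matrix n n ℂ)
    (htr : ∀ X, (Φ X).trace = X.trace) (hunital : Φ 1 = 1) {V W : Matrix n n ℂ}
    (hV : V ∈ unitaryGroup n ℂ) (hW : W ∈ unitaryGroup n ℂ) :
    transitionMatrix Φ.toLinearMap V W ∈ doublyStochastic ℝ n := by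
  have hQ : ∀ j, (V * single j j 1 * star V).PosSemidef := fun j => by
    have hsingle : (single j j (1 : ℂ)).PosSemidef := by
      simpa using posSemidef_conjTranspose_mul_self (single j j (1 : ℂ))
    simpa [star_eq_conjTranspose] using hsingle.mul_mul_conjTranspose_same V
  have hΦQ : ∀ j, (star W * Φ (V * single j j 1 * star V) * W).PosSemidef := fun j => by
    simpa [star_eq_conjTranspose] using
      (Φ.map_nonneg (hQ j).nonneg).posSemidef.conjTranspose_mul_mul_same W
  rw [mem_doublyStochastic_iff_sum]
  refine ⟨fun i j => (Complex.le_def.mp (hΦQ j).diag_nonneg).1, fun i => ?_, fun j => ?_⟩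
  · simp only [transitionMatrix, PositiveLinearMap.coe_toLinearMap, of_apply, ← Complex.re_sum,
      ← Matrix.sum_apply, ← Finset.sum_mul, ← Finset.mul_sum, ← map_sum, sum_single_one,
      Matrix.mul_one, Unitary.mul_star_self_of_mem hV, hunital,
      Unitary.star_mul_self_of_mem hW, one_apply_eq, Complex.one_re]
  · simp only [transitionMatrix, PositiveLinearMap.coe_toLinearMap, of_apply, ← Complex.re_sum]
    change (trace (star W * Φ (V * single j j 1 * star V) * W)).re = 1
    rw [trace_mul_cycle, Unitary.mul_star_self_of_mem hW, Matrix.one_mul, htr, trace_mul_cycle,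
      Unitary.star_mul_self_of_mem hV]
    simp

theorem Matrix.IsHermitian.eigenvalues_map_eq_transitionMatrix_mulVec
    (Φ : Matrix n n ℂ →ₗ[ℂ] Matrix n n ℂ) {A : Matrix n n ℂ} (hA : A.IsHermitian)
    (hΦA : (Φ A).IsHermitian) :
    hΦA.eigenvalues =
      transitionMatrix Φ hA.eigenvectorUnitary hΦA.eigenvectorUnitary *ᵥ hA.eigenvalues := by
  set μ := hΦA.eigenvalues
  set V : Matrix n n ℂ := ↑hA.eigenvectorUnitary
  set W : Matrix n n ℂ := ↑hΦA.eigenvectorUnitary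
  have hΦ : Φ A = ∑ j, (hA.eigenvalues j : ℂ) • Φ (V * single j j 1 * star V) := by
    conv_lhs => rw [hA.eq_sum_smul_eigenprojection]
    simp only [map_sum, map_smul, V]
  ext i
  have h : (star W * Φ A * W) i i = (μ i : ℂ) := by
    simpa using congrFun (congrFun hΦA.star_eigenvectorUnitary_mul_mul i) i
  rw [hΦ] at h
  simp only [Finset.mul_sum, Finset.sum_mul, Matrix.mul_smul, Matrix.smul_mul, Matrix.sum_apply,
    Matrix.smul_apply, smul_eq_mul] at h
  have h' := congrArg Complex.re h
  simp only [Complex.re_sum, Complex.ofReal_re, Complex.re_ofReal_mul] at h'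
  rw [← h']
  exact Finset.sum_congr rfl fun j _ => mul_comm _ _

theorem re_trace_mul_log_map_le (Φ : Matrix n n ℂ →ₚ[ℂ] Matrix n n ℂ)
    (htr : ∀ X, (Φ X).trace = X.trace) (hunital : Φ 1 = 1) {ψ : Matrix n n ℂ}
    (hψ : ψ.PosSemidef) :
    (Φ ψ * cfc Real.log (Φ ψ)).trace.re ≤ (ψ * cfc Real.log ψ).trace.re := by
  have hΦψ : (Φ ψ).PosSemidef := (Φ.map_nonneg hψ.nonneg).posSemidef
  rw [hΦψ.1.re_trace_mul_cfc_self, hψ.1.re_trace_mul_cfc_self,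
    hψ.1.eigenvalues_map_eq_transitionMatrix_mulVec Φ.toLinearMap hΦψ.1]
  exact Real.sum_mul_log_mulVec_le_of_mem_doublyStochastic
    (transitionMatrix_mem_doublyStochastic Φ htr hunital hψ.1.eigenvectorUnitary.2
      hΦψ.1.eigenvectorUnitary.2) hψ.eigenvalues_nonneg

theorem relEnt_map_le (Φ : Matrix n n ℂ →ₚ[ℂ] Matrix n n ℂ) (htr : ∀ X, (Φ X).trace = X.trace)
    {σ : Matrix n n ℂ} (hσ : IsSelfAdjoint σ) (hfix : ∀ g : ℝ → ℝ, Φ (cfc g σ) = cfc g σ)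
    {ψ : Matrix n n ℂ} (hψ : ψ.PosSemidef) : relEnt (Φ ψ) σ ≤ relEnt ψ σ := by
  have hunital : Φ 1 = 1 := by simpa [cfc_const_one ℝ σ] using hfix fun _ => 1
  rw [relEnt_eq_sub, relEnt_eq_sub, trace_map_mul_cfc Φ htr hσ hfix]
  linarith [re_trace_mul_log_map_le Φ htr hunital hψ]

end Entropy

section Averages

variable {n : Type*} [Fintype n] [DecidableEq n]

theorem sum_relEnt_eq_sum_relEnt_sub {ι : Type*} [Fintype ι] (ρ : ι → Matrix n n ℂ)
    {ρ' : Matrix n n ℂ} (σ : Matrix n n ℂ) {k : ℝ} (hρ' : ∑ i, ρ i = (k : ℂ) • ρ') :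
    ∑ i, relEnt (ρ i) ρ' = ∑ i, relEnt (ρ i) σ - k * relEnt ρ' σ := by
  have hpair : ∀ X, ∑ i, (ρ i * X).trace.re = k * (ρ' * X).trace.re := fun X => by
    rw [← Complex.re_sum, ← trace_sum, ← Finset.sum_mul, hρ', Matrix.smul_mul, trace_smul,
      smul_eq_mul, Complex.re_ofReal_mul]
  simp only [relEnt_eq_sub, Finset.sum_sub_distrib, hpair]
  ring

theorem trace_average_mul_eq {m ι : Type*} [Fintype m] [Fintype ι] [Nonempty ι]
    (ρ : ι → Matrix m m ℂ) (X : Matrix m m ℂ) {c : ℂ} (h : ∀ i, (ρ i * X).trace = c) :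
    (((Fintype.card ι : ℂ)⁻¹ • ∑ i, ρ i) * X).trace = c := by
  simp only [Matrix.smul_mul, Finset.sum_mul, trace_smul, trace_sum, h, Finset.sum_const,
    Finset.card_univ, nsmul_eq_mul, smul_eq_mul]
  rw [inv_mul_cancel_left₀ (Nat.cast_ne_zero.mpr Fintype.card_ne_zero)]

end Averages

section Twirl

variable {n G : Type*} [Fintype n] [Fintype G] {U : G → Matrix n n ℂ}

theorem posSemidef_twirl {X : Matrix n n ℂ} (hX : X.PosSemidef) : (twirl U X).PosSemidef :=
  (posSemidef_sum _ fun g _ => hX.mul_mul_conjTranspose_same (U g)).smul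
    (inv_nonneg.mpr (Nat.cast_nonneg _))

variable [DecidableEq n]

theorem twirl_eq_self_of_commute [Nonempty G] (hU : ∀ g, U g ∈ unitaryGroup n ℂ)
    {X : Matrix n n ℂ} (hX : ∀ g, Commute (U g) X) : twirl U X = X := by
  have hconj : ∀ g, U g * X * (U g)ᴴ = X := fun g => by
    rw [(hX g).eq, Matrix.mul_assoc, ← star_eq_conjTranspose,
      Unitary.mul_star_self_of_mem (hU g), Matrix.mul_one]
  simp only [twirl, hconj, Finset.sum_const, Finset.card_univ, ← Nat.cast_smul_eq_nsmul ℂ,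
    smul_smul]
  rw [inv_mul_cancel₀ (Nat.cast_ne_zero.mpr Fintype.card_ne_zero), one_smul]

theorem trace_twirl_mul_of_commute [Nonempty G] (hU : ∀ g, U g ∈ unitaryGroup n ℂ)
    {X : Matrix n n ℂ} (hX : ∀ g, Commute (U g) X) (Y : Matrix n n ℂ) :
    (twirl U Y * X).trace = (Y * X).trace := by
  have hconj : ∀ g, (U g * Y * (U g)ᴴ * X).trace = (Y * X).trace := fun g =>
    calc (U g * Y * (U g)ᴴ * X).trace = (Y * (U g)ᴴ * (X * U g)).trace := by
          simp only [Matrix.mul_assoc]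
          rw [trace_mul_comm]
          simp only [Matrix.mul_assoc]
      _ = (Y * X).trace := by
          rw [← (hX g).eq, ← Matrix.mul_assoc, Matrix.mul_assoc Y, ← star_eq_conjTranspose,
            Unitary.star_mul_self_of_mem (hU g), Matrix.mul_one]
  simp only [twirl, Matrix.smul_mul, trace_smul, Finset.sum_mul, trace_sum, hconj,
    Finset.sum_const, Finset.card_univ, nsmul_eq_mul, smul_eq_mul, ← mul_assoc]
  rw [inv_mul_cancel₀ (Nat.cast_ne_zero.mpr Fintype.card_ne_zero), one_mul]

theorem commute_twirl [Group G] (hU : ∀ g, U g ∈ unitaryGroup n ℂ)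
    (hUmul : ∀ g g', U (g * g') = U g * U g') (X : Matrix n n ℂ) (g : G) :
    Commute (U g) (twirl U X) := by
  have hconj : U g * twirl U X * (U g)ᴴ = twirl U X := by
    simp only [twirl, Matrix.mul_smul, Matrix.smul_mul, Finset.mul_sum, Finset.sum_mul]
    congr 1
    refine Fintype.sum_equiv (Equiv.mulLeft g) _ _ fun h => ?_
    simp only [Equiv.coe_mulLeft, hUmul, conjTranspose_mul, Matrix.mul_assoc]
  calc U g * twirl U X = U g * twirl U X * ((U g)ᴴ * U g) := by
        rw [← star_eq_conjTranspose, Unitary.star_mul_self_of_mem (hU g), Matrix.mul_one]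
    _ = twirl U X * U g := by rw [← Matrix.mul_assoc, hconj]

theorem commute_cfc_twirl [Group G] (hU : ∀ g, U g ∈ unitaryGroup n ℂ)
    (hUmul : ∀ g g', U (g * g') = U g * U g') (ψ : Matrix n n ℂ) (f : ℝ → ℝ) (g : G) :
    Commute (U g) (cfc f (twirl U ψ)) :=
  ((commute_twirl hU hUmul ψ g).symm.cfc_real f).symm

theorem map_cfc_twirl_eq_self [Group G] (hU : ∀ g, U g ∈ unitaryGroup n ℂ)
    (hUmul : ∀ g g', U (g * g') = U g * U g') {Φ : Matrix n n ℂ →ₗ[ℂ] Matrix n n ℂ}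
    (hΦ : ∀ Y, Φ (twirl U Y) = twirl U Y) (ψ : Matrix n n ℂ) (f : ℝ → ℝ) :
    Φ (cfc f (twirl U ψ)) = cfc f (twirl U ψ) := by
  simpa only [twirl_eq_self_of_commute hU (commute_cfc_twirl hU hUmul ψ f)] using
    hΦ (cfc f (twirl U ψ))

end Twirl

theorem avg_relEnt_le_relEnt_twirl_general
    {G : Type*} [Group G] [Fintype G] {d : ℕ}
    (U : G → Matrix (Fin d) (Fin d) ℂ)
    (hU : ∀ g, U g ∈ Matrix.unitaryGroup (Fin d) ℂ)
    (hUmul : ∀ g g', U (g * g') = U g * U g')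
    (ψ : Matrix (Fin d) (Fin d) ℂ) (hψ : ψ.PosSemidef)
    (M : ℕ) (hM : 1 ≤ M)
    (E : Fin M → Matrix (Fin d) (Fin d) ℂ →ₗ[ℂ] Matrix (Fin d) (Fin d) ℂ)
    (hEpos : ∀ m (Y : Matrix (Fin d) (Fin d) ℂ), Y.PosSemidef → (E m Y).PosSemidef)
    (hEtr : ∀ m (Y : Matrix (Fin d) (Fin d) ℂ), (E m Y).trace = Y.trace)
    (hEtwirl : ∀ m (Y : Matrix (Fin d) (Fin d) ℂ), E m (twirl U Y) = twirl U Y) :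
    (M : ℝ)⁻¹ * ∑ m, relEnt (E m ψ) ((M : ℂ)⁻¹ • ∑ m', E m' ψ)
      ≤ relEnt ψ (twirl U ψ) := by
  set σ := twirl U ψ
  set ρ := (M : ℂ)⁻¹ • ∑ m', E m' ψ
  have hσ : σ.PosSemidef := posSemidef_twirl hψ
  have : Nonempty (Fin M) := ⟨⟨0, hM⟩⟩
  let Φ m : Matrix (Fin d) (Fin d) ℂ →ₚ[ℂ] Matrix (Fin d) (Fin d) ℂ :=
    .mk₀ (E m) fun Y hY => (hEpos m Y hY.posSemidef).nonneg
  have hfix m : ∀ f : ℝ → ℝ, E m (cfc f σ) = cfc f σ :=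
    map_cfc_twirl_eq_self hU hUmul (hEtwirl m) ψ
  have hDPI m : relEnt (E m ψ) σ ≤ relEnt ψ σ :=
    relEnt_map_le (Φ m) (hEtr m) hσ.1 (hfix m) hψ
  have hKlein : 0 ≤ relEnt ρ σ := by
    refine relEnt_nonneg_of_forall_trace_mul_cfc_eq ((posSemidef_sum _ fun m _ =>
      hEpos m ψ hψ).smul (inv_nonneg.mpr (Nat.cast_nonneg _))) hσ fun f => ?_
    simpa only [Fintype.card_fin] using trace_average_mul_eq (fun m => E m ψ) (cfc f σ) fun m =>
      (trace_map_mul_cfc (Φ m) (hEtr m) hσ.1 (hfix m) ψ f).trans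
        (trace_twirl_mul_of_commute hU (commute_cfc_twirl hU hUmul ψ f) ψ).symm
  have hsum : ∑ m, E m ψ = ((M : ℝ) : ℂ) • ρ := by
    rw [smul_smul, Complex.ofReal_natCast, mul_inv_cancel₀ (by positivity), one_smul]
  calc (M : ℝ)⁻¹ * ∑ m, relEnt (E m ψ) ρ
      = (M : ℝ)⁻¹ * (∑ m, relEnt (E m ψ) σ - M * relEnt ρ σ) := by
        rw [sum_relEnt_eq_sum_relEnt_sub _ σ hsum]
    _ ≤ (M : ℝ)⁻¹ * ∑ _m : Fin M, relEnt ψ σ := by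
        gcongr
        linarith [Finset.sum_le_sum fun m (_ : m ∈ Finset.univ) => hDPI m,
          mul_nonneg (Nat.cast_nonneg M) hKlein]
    _ = relEnt ψ σ := by
        rw [Finset.sum_const, Finset.card_univ, Fintype.card_fin, nsmul_eq_mul,
          inv_mul_cancel_left₀ (by positivity)]

/-- The mutual-information chain of inequalities in the weak-converse proof of
Theorem 1: the average relative entropy of the encoded states to their average
is bounded by `D(ψ‖𝒢(ψ))`. -/
theorem avg_relEnt_le_relEnt_twirl
    {G : Type*} [Group G] [Fintype G] {d : ℕ}
    (U : G → Matrix (Fin d) (Fin d) ℂ)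
    (hU : ∀ g, U g ∈ Matrix.unitaryGroup (Fin d) ℂ)
    (hU1 : U 1 = 1) (hUmul : ∀ g g', U (g * g') = U g * U g')
    (ψ : Matrix (Fin d) (Fin d) ℂ) (hψ : ψ.PosSemidef) (hψtr : ψ.trace = 1)
    (M : ℕ) (hM : 1 ≤ M)
    (E : Fin M → Matrix (Fin d) (Fin d) ℂ →ₗ[ℂ] Matrix (Fin d) (Fin d) ℂ)
    (hEpos : ∀ m (Y : Matrix (Fin d) (Fin d) ℂ), Y.PosSemidef → (E m Y).PosSemidef)
    (hEtr : ∀ m (Y : Matrix (Fin d) (Fin d) ℂ), (E m Y).trace = Y.trace)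
    (hEtwirl : ∀ m (Y : Matrix (Fin d) (Fin d) ℂ), E m (twirl U Y) = twirl U Y) :
    (M : ℝ)⁻¹ * ∑ m, relEnt (E m ψ) ((M : ℂ)⁻¹ • ∑ m', E m' ψ)
      ≤ relEnt ψ (twirl U ψ) :=
  avg_relEnt_le_relEnt_twirl_general U hU hUmul ψ hψ M hM E hEpos hEtr hEtwirl
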